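/- (On-policy variance recursion against u^{b*}) Let b*_t(s,a) = q_{π,t}(s,a), let μ* = μ^{*,b*}, and let u^{b*} denote u defined with baseline b*. For every state s: at t = T−1, Var( G^{PDIS}(τ^π_{t:T−1}) | S_t = s ) = E_{a∼π_t(·|s)}[ u^{b*}_t(s,a) ] + Var_{a∼π_t(·|s)}( q_{π,t}(s,a) ); and for t ≤ T−2, Var( G^{PDIS}(τ^π_{t:T−1}) | S_t = s ) = E_{a∼π_t(·|s)}[ u^{b*}_t(s,a) ] + Var_{a∼π_t(·|s)}( q_{π,t}(s,a) ) + E_{a∼π_t(·|s), s'∼p(·|s,a)}[ Var(G^{PDIS}(τ^π_{t+1:T−1}) | S_{t+1}=s') − Var(G^{b*}(τ^{μ*}_{t+1:T−1}) | S_{t+1}=s') ]. -/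
import Mathlib


open Finset

namespace DOpt

variable {S A : Type}

/-- A time-indexed policy: for each time step and state, a probability distribution on actions. -/
def IsPolicy [Fintype A] (μ : ℕ → S → A → ℝ) : Prop :=
  ∀ t s, (∀ a, 0 ≤ μ t s a) ∧ ∑ a, μ t s a = 1

/-- A transition probability kernel on the finite state space. -/
def IsKernel [Fintype S] (p : S → A → S → ℝ) : Prop :=
  ∀ s a, (∀ s', 0 ≤ p s a s') ∧ ∑ s', p s a s' = 1

/-- Action value `q_{π,t}(s,a)` computed with `n` remaining transitions after time `t`
(`n = T - 1 - t` in a horizon-`T` MDP). -/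
noncomputable def qval [Fintype S] [Fintype A] (p : S → A → S → ℝ) (π : ℕ → S → A → ℝ)
    (r : S → A → ℝ) : ℕ → ℕ → S → A → ℝ
  | 0, _, s, a => r s a
  | n + 1, t, s, a =>
      r s a + ∑ s', p s a s' * ∑ a', π (t + 1) s' a' * qval p π r n (t + 1) s' a'

/-- `q_{π,t}(s,a)` in the horizon-`T` MDP. -/
noncomputable def qf [Fintype S] [Fintype A] (T : ℕ) (p : S → A → S → ℝ)
    (π : ℕ → S → A → ℝ) (r : S → A → ℝ) (t : ℕ) (s : S) (a : A) : ℝ :=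
  qval p π r (T - 1 - t) t s a

/-- `v_{π,t}(s) = Σ_a π_t(a|s) q_{π,t}(s,a)`. -/
noncomputable def vf [Fintype S] [Fintype A] (T : ℕ) (p : S → A → S → ℝ)
    (π : ℕ → S → A → ℝ) (r : S → A → ℝ) (t : ℕ) (s : S) : ℝ :=
  ∑ a, π t s a * qf T p π r t s a

/-- `ν_{π,t}(s,a) = Var_{s' ∼ p(·|s,a)}(v_{π,t+1}(s'))` for `t ≤ T-2`, and `0` at `t = T-1`. -/
noncomputable def nuf [Fintype S] [Fintype A] (T : ℕ) (p : S → A → S → ℝ)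
    (π : ℕ → S → A → ℝ) (r : S → A → ℝ) (t : ℕ) (s : S) (a : A) : ℝ :=
  if t + 2 ≤ T then
    (∑ s', p s a s' * (vf T p π r (t + 1) s') ^ 2) -
      (∑ s', p s a s' * vf T p π r (t + 1) s') ^ 2
  else 0

/-- Trajectories with `n` further transitions after the first action:
`(a_t, s_{t+1}, a_{t+1}, …, s_{t+n}, a_{t+n})`. -/
def Traj (S A : Type) : ℕ → Type
  | 0 => A
  | n + 1 => A × S × Traj S A n

/-- Expectation, over trajectories generated by the behavior policy `μ` starting at time `t`
in state `s` with `n` further transitions, of a function `f` of the trajectory. -/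
noncomputable def Exp [Fintype S] [Fintype A] (p : S → A → S → ℝ) (μ : ℕ → S → A → ℝ) :
    (n : ℕ) → ℕ → S → (Traj S A n → ℝ) → ℝ
  | 0, t, s, f => ∑ a, μ t s a * f a
  | n + 1, t, s, f =>
      ∑ a, μ t s a * ∑ s', p s a s' * Exp p μ n (t + 1) s' (fun τ => f (a, s', τ))

/-- Conditional variance of a function of the trajectory, given `S_t = s`. -/
noncomputable def Var [Fintype S] [Fintype A] (p : S → A → S → ℝ) (μ : ℕ → S → A → ℝ)
    (n : ℕ) (t : ℕ) (s : S) (f : Traj S A n → ℝ) : ℝ :=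
  Exp p μ n t s (fun τ => (f τ) ^ 2) - (Exp p μ n t s f) ^ 2

/-- `b̄_t(s) = Σ_a π_t(a|s) b_t(s,a)`. -/
noncomputable def bbar [Fintype A] (π : ℕ → S → A → ℝ) (b : ℕ → S → A → ℝ)
    (t : ℕ) (s : S) : ℝ :=
  ∑ a, π t s a * b t s a

/-- The per-decision importance-sampling estimator `G^b` with baseline `b`, target policy `π`
and behavior policy `μ`, as a function of the trajectory from time `t` (with `n` further
transitions, `n = T - 1 - t`). -/
noncomputable def Gest [Fintype S] [Fintype A] (π μ : ℕ → S → A → ℝ) (r : S → A → ℝ)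
    (b : ℕ → S → A → ℝ) : (n : ℕ) → ℕ → S → Traj S A n → ℝ
  | 0, t, s, a => (π t s a / μ t s a) * (r s a - b t s a) + bbar π b t s
  | n + 1, t, s, (a, s', τ) =>
      (π t s a / μ t s a) * (r s a + Gest π μ r b n (t + 1) s' τ - b t s a) + bbar π b t s

/-- Normalization of a weight vector into a probability distribution; the uniform distribution
when the total weight vanishes. -/
noncomputable def normPol [Fintype A] (w : A → ℝ) (a : A) : ℝ :=
  if (∑ a', w a') = 0 then ((Fintype.card A : ℝ))⁻¹ else w a / ∑ a', w a'

/-- `u_{π,t}(s,a)` (with baseline `b`), defined backwards in time together with the optimal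
behavior policy `μ*`; the first argument is the number `n = T - 1 - t` of remaining
transitions after time `t`. -/
noncomputable def uAux [Fintype S] [Fintype A] (T : ℕ) (p : S → A → S → ℝ)
    (π : ℕ → S → A → ℝ) (r : S → A → ℝ) (b : ℕ → S → A → ℝ) :
    ℕ → ℕ → S → A → ℝ
  | 0, t, s, a => (qf T p π r t s a - b t s a) ^ 2
  | n + 1, t, s, a =>
      (qf T p π r t s a - b t s a) ^ 2 + nuf T p π r t s a +
        ∑ s', p s a s' *
          Var p
            (fun t' s₁ a₁ => normPol (fun a₂ =>
              π t' s₁ a₂ * Real.sqrt (uAux T p π r b (n - (t' - (t + 1))) t' s₁ a₂)) a₁)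
            n (t + 1) s'
            (Gest π
              (fun t' s₁ a₁ => normPol (fun a₂ =>
                π t' s₁ a₂ * Real.sqrt (uAux T p π r b (n - (t' - (t + 1))) t' s₁ a₂)) a₁)
              r b n (t + 1) s')
  termination_by n => n
  decreasing_by all_goals omega

/-- `u_{π,t}(s,a)` in the horizon-`T` MDP, with baseline `b`. -/
noncomputable def uf [Fintype S] [Fintype A] (T : ℕ) (p : S → A → S → ℝ)
    (π : ℕ → S → A → ℝ) (r : S → A → ℝ) (b : ℕ → S → A → ℝ) (t : ℕ) (s : S) (a : A) : ℝ :=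
  uAux T p π r b (T - 1 - t) t s a

/-- The optimal behavior policy `μ*_t(a|s) ∝ π_t(a|s) √(u_{π,t}(s,a))` tailored to the
baseline `b` (uniform when all the weights vanish). -/
noncomputable def mustar [Fintype S] [Fintype A] (T : ℕ) (p : S → A → S → ℝ)
    (π : ℕ → S → A → ℝ) (r : S → A → ℝ) (b : ℕ → S → A → ℝ) (t : ℕ) (s : S) (a : A) : ℝ :=
  normPol (fun a' => π t s a' * Real.sqrt (uf T p π r b t s a')) a

/-- Conditional expectation `E[G^b(τ^μ_{t:T-1}) | S_t = s]`. -/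
noncomputable def ExpG [Fintype S] [Fintype A] (T : ℕ) (p : S → A → S → ℝ)
    (π μ : ℕ → S → A → ℝ) (r : S → A → ℝ) (b : ℕ → S → A → ℝ) (t : ℕ) (s : S) : ℝ :=
  Exp p μ (T - 1 - t) t s (Gest π μ r b (T - 1 - t) t s)

/-- Conditional variance `Var(G^b(τ^μ_{t:T-1}) | S_t = s)`. -/
noncomputable def VarG [Fintype S] [Fintype A] (T : ℕ) (p : S → A → S → ℝ)
    (π μ : ℕ → S → A → ℝ) (r : S → A → ℝ) (b : ℕ → S → A → ℝ) (t : ℕ) (s : S) : ℝ :=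
  Var p μ (T - 1 - t) t s (Gest π μ r b (T - 1 - t) t s)

/-- Membership in the enlarged policy-search space
`Λ = {μ : ∀ t,s,a, μ_t(a|s) = 0 → π_t(a|s)·u_{π,t}(s,a) = 0}`. -/
def inLambda [Fintype S] [Fintype A] (T : ℕ) (p : S → A → S → ℝ)
    (π : ℕ → S → A → ℝ) (r : S → A → ℝ) (b : ℕ → S → A → ℝ) (μ : ℕ → S → A → ℝ) : Prop :=
  ∀ t s a, t < T → μ t s a = 0 → π t s a * uf T p π r b t s a = 0


/-- The optimal baseline `b*_t(s,a) = q_{π,t}(s,a)`. -/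
noncomputable def bstar [Fintype S] [Fintype A] (T : ℕ) (p : S → A → S → ℝ)
    (π : ℕ → S → A → ℝ) (r : S → A → ℝ) : ℕ → S → A → ℝ :=
  fun t s a => qf T p π r t s a

/-- The zero baseline: with it, `Gest` is the plain PDIS estimator `G^{PDIS}`. -/
def zerob : ℕ → S → A → ℝ := fun _ _ _ => 0

section AuxLemmas

variable {S A : Type} [Fintype S] [Fintype A]

lemma my_ratio_mul (c x : ℝ) : c * (c / c * x) = c * x := by
  rcases eq_or_ne c 0 with h | h <;> simp [h, div_self]

lemma my_ratio_sq (c : ℝ) : (c / c) ^ 2 = c / c := by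
  rcases eq_or_ne c 0 with h | h <;> simp [h, div_self]

lemma my_ratio_mul_sq (c x : ℝ) : c * (c / c * x) ^ 2 = c * x ^ 2 := by
  rcases eq_or_ne c 0 with h | h <;> simp [h, div_self]

lemma Exp_add (p : S → A → S → ℝ) (μ : ℕ → S → A → ℝ) :
    ∀ (n t : ℕ) (s : S) (f g : Traj S A n → ℝ),
      Exp p μ n t s (fun τ => f τ + g τ) = Exp p μ n t s f + Exp p μ n t s g
  | 0, t, s, f, g => by
      simp [Exp, mul_add, Finset.sum_add_distrib]
  | n+1, t, s, f, g => by
      simp only [Exp]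
      rw [← Finset.sum_add_distrib]
      refine Finset.sum_congr rfl fun a _ => ?_
      rw [← mul_add, ← Finset.sum_add_distrib]
      congr 1
      refine Finset.sum_congr rfl fun s' _ => ?_
      rw [← mul_add, Exp_add p μ n (t+1) s' _ _]

lemma Exp_smul (p : S → A → S → ℝ) (μ : ℕ → S → A → ℝ) :
    ∀ (n t : ℕ) (s : S) (c : ℝ) (f : Traj S A n → ℝ),
      Exp p μ n t s (fun τ => c * f τ) = c * Exp p μ n t s f
  | 0, t, s, c, f => by
      simp only [Exp, Finset.mul_sum]
      exact Finset.sum_congr rfl fun a _ => by ring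
  | n+1, t, s, c, f => by
      simp only [Exp, Exp_smul p μ n (t+1), Finset.mul_sum]
      exact Finset.sum_congr rfl fun a _ => Finset.sum_congr rfl fun s' _ => by ring

lemma Exp_const (p : S → A → S → ℝ) (hp : IsKernel p) (μ : ℕ → S → A → ℝ)
    (hμ : IsPolicy μ) :
    ∀ (n t : ℕ) (s : S) (c : ℝ), Exp p μ n t s (fun _ => c) = c
  | 0, t, s, c => by
      simp [Exp, ← Finset.sum_mul, (hμ t s).2]
  | n+1, t, s, c => by
      simp only [Exp, Exp_const p hp μ hμ n (t+1)]
      have : ∀ a : A, (∑ s', p s a s' * c) = c := fun a => by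
        rw [← Finset.sum_mul, (hp s a).2, one_mul]
      simp only [this, ← Finset.sum_mul, (hμ t s).2, one_mul]

lemma Exp_congr (p : S → A → S → ℝ) (μ μ' : ℕ → S → A → ℝ) :
    ∀ (n t : ℕ) (s : S) (f : Traj S A n → ℝ),
      (∀ t' s₁ a, t ≤ t' → μ t' s₁ a = μ' t' s₁ a) →
      Exp p μ n t s f = Exp p μ' n t s f
  | 0, t, s, f, h => by
      simp only [Exp, h t s _ le_rfl]
  | n+1, t, s, f, h => by
      simp only [Exp]
      refine Finset.sum_congr rfl fun a _ => ?_
      rw [h t s a le_rfl]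
      congr 1
      refine Finset.sum_congr rfl fun s' _ => ?_
      rw [Exp_congr p μ μ' n (t+1) s' _ fun t' s₁ a₁ ht' => h t' s₁ a₁ (by omega)]

lemma Gest_congr (π : ℕ → S → A → ℝ) (μ μ' : ℕ → S → A → ℝ) (r : S → A → ℝ)
    (b : ℕ → S → A → ℝ) :
    ∀ (n t : ℕ) (s : S) (τ : Traj S A n),
      (∀ t' s₁ a, t ≤ t' → μ t' s₁ a = μ' t' s₁ a) →
      Gest π μ r b n t s τ = Gest π μ' r b n t s τ
  | 0, t, s, a, h => by
      simp only [Gest, h t s a le_rfl]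
  | n+1, t, s, (a, s', τ), h => by
      simp only [Gest, h t s a le_rfl,
        Gest_congr π μ μ' r b n (t+1) s' τ fun t' s₁ a₁ ht' => h t' s₁ a₁ (by omega)]

lemma bbar_zerob (π : ℕ → S → A → ℝ) (t : ℕ) (s : S) :
    bbar π (zerob : ℕ → S → A → ℝ) t s = 0 := by
  simp [bbar, zerob]

lemma ExpG_onpolicy (p : S → A → S → ℝ) (hp : IsKernel p) (π : ℕ → S → A → ℝ)
    (hπ : IsPolicy π) (r : S → A → ℝ) :
    ∀ (n t : ℕ) (s : S),
      Exp p π n t s (Gest π π r zerob n t s) = ∑ a, π t s a * qval p π r n t s a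
  | 0, t, s => by
      simp only [Exp, Gest, bbar_zerob, zerob, qval, sub_zero, add_zero]
      exact Finset.sum_congr rfl fun a _ => my_ratio_mul _ _
  | n+1, t, s => by
      simp only [Exp, Gest, bbar_zerob, zerob, sub_zero, add_zero, qval]
      refine Finset.sum_congr rfl fun a _ => ?_
      have hinner : ∀ s' : S,
          Exp p π n (t+1) s' (fun τ => π t s a / π t s a *
            (r s a + Gest π π r zerob n (t+1) s' τ)) =
          π t s a / π t s a * (r s a + ∑ a', π (t+1) s' a' * qval p π r n (t+1) s' a') := by
        intro s'
        rw [Exp_smul]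
        congr 1
        rw [show (fun τ => r s a + Gest π π r zerob n (t+1) s' τ) =
          (fun τ => (fun _ => r s a) τ + Gest π π r zerob n (t+1) s' τ) from rfl,
          Exp_add, Exp_const p hp π hπ, ExpG_onpolicy p hp π hπ r n (t+1) s']
      simp only [hinner]
      rw [show (∑ s', p s a s' * (π t s a / π t s a *
            (r s a + ∑ a', π (t+1) s' a' * qval p π r n (t+1) s' a'))) =
          π t s a / π t s a * ∑ s', p s a s' *
            (r s a + ∑ a', π (t+1) s' a' * qval p π r n (t+1) s' a') from by
        rw [Finset.mul_sum]; exact Finset.sum_congr rfl fun s' _ => by ring]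
      rw [my_ratio_mul]
      congr 1
      rw [show (∑ s', p s a s' * (r s a + ∑ a', π (t+1) s' a' * qval p π r n (t+1) s' a')) =
        (∑ s', p s a s' * r s a) + ∑ s', p s a s' *
          ∑ a', π (t+1) s' a' * qval p π r n (t+1) s' a' from by
        rw [← Finset.sum_add_distrib]; exact Finset.sum_congr rfl fun s' _ => by ring]
      rw [← Finset.sum_mul, (hp s a).2, one_mul]

end AuxLemmas

/-- On-policy variance recursion against `u^{b*}`: with
`b*_t(s,a) = q_{π,t}(s,a)`, `μ* = μ^{*,b*}` and `u^{b*}` the function `u` for `b*`, for every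
state `s`: at `t = T−1`,
`Var(G^{PDIS}(τ^π_{t:T−1})|S_t=s) = E_{a∼π_t(·|s)}[u^{b*}_t(s,a)] + Var_{a∼π_t(·|s)}(q_{π,t}(s,a))`;
and for `t ≤ T−2`,
`Var(G^{PDIS}(τ^π_{t:T−1})|S_t=s) = E_{a∼π_t(·|s)}[u^{b*}_t(s,a)] + Var_{a∼π_t(·|s)}(q_{π,t}(s,a))
  + E_{a∼π_t(·|s), s'∼p(·|s,a)}[Var(G^{PDIS}(τ^π_{t+1:T−1})|S_{t+1}=s')
      − Var(G^{b*}(τ^{μ*}_{t+1:T−1})|S_{t+1}=s')]`. -/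
theorem onpolicy_variance_recursion {S A : Type} [Fintype S] [Fintype A] [Nonempty A]
    (T : ℕ) (hT : 1 ≤ T)
    (p : S → A → S → ℝ) (hp : IsKernel p)
    (r : S → A → ℝ)
    (π : ℕ → S → A → ℝ) (hπ : IsPolicy π) :
    (∀ s : S,
      VarG T p π π r zerob (T - 1) s =
        (∑ a, π (T - 1) s a * uf T p π r (bstar T p π r) (T - 1) s a) +
          ((∑ a, π (T - 1) s a * qf T p π r (T - 1) s a ^ 2) -
            (∑ a, π (T - 1) s a * qf T p π r (T - 1) s a) ^ 2)) ∧
    (∀ (t : ℕ) (s : S), t + 2 ≤ T →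
      VarG T p π π r zerob t s =
        (∑ a, π t s a * uf T p π r (bstar T p π r) t s a) +
          ((∑ a, π t s a * qf T p π r t s a ^ 2) -
            (∑ a, π t s a * qf T p π r t s a) ^ 2) +
          ∑ a, π t s a * ∑ s', p s a s' *
            (VarG T p π π r zerob (t + 1) s' -
              VarG T p π (mustar T p π r (bstar T p π r)) r (bstar T p π r) (t + 1) s')) := by
  constructor
  · -- Part 1: t = T - 1
    intro s
    have h0 : T - 1 - (T - 1) = 0 := by omega
    have huf : ∀ a, uf T p π r (bstar T p π r) (T - 1) s a = 0 := by
      intro a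
      simp [uf, h0, uAux, bstar]
    have hqf : ∀ a, qf T p π r (T - 1) s a = r s a := by
      intro a
      simp [qf, h0, qval]
    rw [VarG, h0, Var]
    simp only [Exp, Gest, bbar_zerob, zerob, sub_zero, add_zero, huf,
      mul_zero, Finset.sum_const_zero, zero_add, hqf, my_ratio_mul_sq, my_ratio_mul]
  · -- Part 2: t ≤ T - 2
    intro t s ht
    set m := T - 2 - t with hmdef
    have hm1 : T - 1 - t = m + 1 := by omega
    have hm2 : T - 1 - (t + 1) = m := by omega
    -- on-policy expectation at time t+1
    have hEG' : ∀ s' : S, Exp p π m (t+1) s' (Gest π π r zerob m (t+1) s') =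
        ∑ a', π (t+1) s' a' * qval p π r m (t+1) s' a' :=
      fun s' => ExpG_onpolicy p hp π hπ r m (t+1) s'
    have hEG'2 : ∀ s' : S, Exp p π m (t+1) s' (fun τ => (Gest π π r zerob m (t+1) s' τ) ^ 2) =
        Var p π m (t+1) s' (Gest π π r zerob m (t+1) s') +
          (∑ a', π (t+1) s' a' * qval p π r m (t+1) s' a') ^ 2 := by
      intro s'
      rw [Var, ← hEG' s']
      ring
    -- q at time t
    have hq : ∀ a, qf T p π r t s a =
        r s a + ∑ s', p s a s' * ∑ a', π (t+1) s' a' * qval p π r m (t+1) s' a' := by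
      intro a
      simp [qf, hm1, qval]
    -- v at time t+1
    have hvf : ∀ s' : S, vf T p π r (t+1) s' =
        ∑ a', π (t+1) s' a' * qval p π r m (t+1) s' a' := by
      intro s'
      simp [vf, qf, hm2]
    -- nu at time t
    have hnuf : ∀ a, nuf T p π r t s a =
        (∑ s', p s a s' * (∑ a', π (t+1) s' a' * qval p π r m (t+1) s' a') ^ 2) -
          (∑ s', p s a s' * ∑ a', π (t+1) s' a' * qval p π r m (t+1) s' a') ^ 2 := by
      intro a
      simp only [nuf, if_pos ht, hvf]
    -- first moment at time t
    have hE : Exp p π (m+1) t s (Gest π π r zerob (m+1) t s) =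
        ∑ a, π t s a * qf T p π r t s a := by
      rw [ExpG_onpolicy p hp π hπ r (m+1) t s]
      exact Finset.sum_congr rfl fun a _ => by rw [qf, hm1]
    -- second moment at time t
    have hE2 : Exp p π (m+1) t s (fun τ => (Gest π π r zerob (m+1) t s τ) ^ 2) =
        ∑ a, π t s a * ((qf T p π r t s a) ^ 2 + nuf T p π r t s a +
          ∑ s', p s a s' * Var p π m (t+1) s' (Gest π π r zerob m (t+1) s')) := by
      simp only [Exp, Gest, bbar_zerob, zerob, sub_zero, add_zero]
      refine Finset.sum_congr rfl fun a _ => ?_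
      have hinner : ∀ s' : S,
          Exp p π m (t+1) s' (fun τ =>
            (π t s a / π t s a * (r s a + Gest π π r zerob m (t+1) s' τ)) ^ 2) =
          π t s a / π t s a *
            ((r s a) ^ 2 + 2 * r s a * (∑ a', π (t+1) s' a' * qval p π r m (t+1) s' a') +
              (Var p π m (t+1) s' (Gest π π r zerob m (t+1) s') +
                (∑ a', π (t+1) s' a' * qval p π r m (t+1) s' a') ^ 2)) := by
        intro s'
        have hfun : (fun τ =>
            (π t s a / π t s a * (r s a + Gest π π r zerob m (t+1) s' τ)) ^ 2) =
            fun τ => π t s a / π t s a *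
              ((fun _ : Traj S A m => (r s a) ^ 2) τ +
               ((fun τ => 2 * r s a * Gest π π r zerob m (t+1) s' τ) τ +
                (fun τ => (Gest π π r zerob m (t+1) s' τ) ^ 2) τ)) := by
          funext τ
          rw [mul_pow, my_ratio_sq]
          ring
        rw [hfun, Exp_smul, Exp_add, Exp_add, Exp_const p hp π hπ, Exp_smul, hEG' s',
          hEG'2 s']
        ring
      simp only [hinner]
      rw [show (∑ s', p s a s' * (π t s a / π t s a *
            ((r s a) ^ 2 + 2 * r s a * (∑ a', π (t+1) s' a' * qval p π r m (t+1) s' a') +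
              (Var p π m (t+1) s' (Gest π π r zerob m (t+1) s') +
                (∑ a', π (t+1) s' a' * qval p π r m (t+1) s' a') ^ 2)))) =
          π t s a / π t s a * ∑ s', p s a s' *
            ((r s a) ^ 2 + 2 * r s a * (∑ a', π (t+1) s' a' * qval p π r m (t+1) s' a') +
              (Var p π m (t+1) s' (Gest π π r zerob m (t+1) s') +
                (∑ a', π (t+1) s' a' * qval p π r m (t+1) s' a') ^ 2)) from by
        rw [Finset.mul_sum]
        exact Finset.sum_congr rfl fun s' _ => by ring]
      rw [my_ratio_mul]
      congr 1
      have hsplit : (∑ s', p s a s' *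
            ((r s a) ^ 2 + 2 * r s a * (∑ a', π (t+1) s' a' * qval p π r m (t+1) s' a') +
              (Var p π m (t+1) s' (Gest π π r zerob m (t+1) s') +
                (∑ a', π (t+1) s' a' * qval p π r m (t+1) s' a') ^ 2))) =
          (∑ s', p s a s') * (r s a) ^ 2 +
          2 * r s a * (∑ s', p s a s' * ∑ a', π (t+1) s' a' * qval p π r m (t+1) s' a') +
          (∑ s', p s a s' * Var p π m (t+1) s' (Gest π π r zerob m (t+1) s')) +
          (∑ s', p s a s' * (∑ a', π (t+1) s' a' * qval p π r m (t+1) s' a') ^ 2) := by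
        rw [Finset.sum_mul, Finset.mul_sum, ← Finset.sum_add_distrib,
          ← Finset.sum_add_distrib, ← Finset.sum_add_distrib]
        exact Finset.sum_congr rfl fun s' _ => by ring
      rw [hsplit, (hp s a).2, hq a, hnuf a]
      ring
    -- u at time t against the optimal baseline
    have hu : ∀ a, uf T p π r (bstar T p π r) t s a =
        nuf T p π r t s a + ∑ s', p s a s' *
          VarG T p π (mustar T p π r (bstar T p π r)) r (bstar T p π r) (t + 1) s' := by
      intro a
      have hagree : ∀ t' s₁ a₁, t + 1 ≤ t' →
          normPol (fun a₂ => π t' s₁ a₂ *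
            Real.sqrt (uAux T p π r (bstar T p π r) (m - (t' - (t + 1))) t' s₁ a₂)) a₁ =
          mustar T p π r (bstar T p π r) t' s₁ a₁ := by
        intro t' s₁ a₁ ht'
        have hidx : m - (t' - (t + 1)) = T - 1 - t' := by omega
        rw [hidx]
        rfl
      have hVareq : ∀ s' : S,
          Var p
            (fun t' s₁ a₁ => normPol (fun a₂ =>
              π t' s₁ a₂ * Real.sqrt (uAux T p π r (bstar T p π r)
                (m - (t' - (t + 1))) t' s₁ a₂)) a₁)
            m (t + 1) s'
            (Gest π
              (fun t' s₁ a₁ => normPol (fun a₂ =>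
                π t' s₁ a₂ * Real.sqrt (uAux T p π r (bstar T p π r)
                  (m - (t' - (t + 1))) t' s₁ a₂)) a₁)
              r (bstar T p π r) m (t + 1) s') =
          VarG T p π (mustar T p π r (bstar T p π r)) r (bstar T p π r) (t + 1) s' := by
        intro s'
        have hGfun : Gest π
            (fun t' s₁ a₁ => normPol (fun a₂ =>
              π t' s₁ a₂ * Real.sqrt (uAux T p π r (bstar T p π r)
                (m - (t' - (t + 1))) t' s₁ a₂)) a₁)
            r (bstar T p π r) m (t + 1) s' =
            Gest π (mustar T p π r (bstar T p π r)) r (bstar T p π r) m (t + 1) s' :=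
          funext fun τ => Gest_congr π _ _ r (bstar T p π r) m (t+1) s' τ
            fun t' s₁ a₁ ht' => hagree t' s₁ a₁ ht'
        rw [hGfun, VarG, hm2, Var, Var,
          Exp_congr p _ (mustar T p π r (bstar T p π r)) m (t+1) s' _
            (fun t' s₁ a₁ ht' => hagree t' s₁ a₁ ht'),
          Exp_congr p _ (mustar T p π r (bstar T p π r)) m (t+1) s' _
            (fun t' s₁ a₁ ht' => hagree t' s₁ a₁ ht')]
      rw [uf, hm1]
      rw [show uAux T p π r (bstar T p π r) (m + 1) t s a =
        (qf T p π r t s a - bstar T p π r t s a) ^ 2 + nuf T p π r t s a +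
          ∑ s', p s a s' *
            Var p
              (fun t' s₁ a₁ => normPol (fun a₂ =>
                π t' s₁ a₂ * Real.sqrt (uAux T p π r (bstar T p π r)
                  (m - (t' - (t + 1))) t' s₁ a₂)) a₁)
              m (t + 1) s'
              (Gest π
                (fun t' s₁ a₁ => normPol (fun a₂ =>
                  π t' s₁ a₂ * Real.sqrt (uAux T p π r (bstar T p π r)
                    (m - (t' - (t + 1))) t' s₁ a₂)) a₁)
                r (bstar T p π r) m (t + 1) s') from by rw [uAux]]
      have hb0 : qf T p π r t s a - bstar T p π r t s a = 0 := sub_self _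
      rw [hb0]
      simp only [hVareq]
      ring
    -- putting things together
    have hVG1 : ∀ s' : S, VarG T p π π r zerob (t+1) s' =
        Var p π m (t+1) s' (Gest π π r zerob m (t+1) s') := by
      intro s'; rw [VarG, hm2]
    have hVG2 : ∀ s' : S,
        VarG T p π (mustar T p π r (bstar T p π r)) r (bstar T p π r) (t+1) s' =
        Var p (mustar T p π r (bstar T p π r)) m (t+1) s'
          (Gest π (mustar T p π r (bstar T p π r)) r (bstar T p π r) m (t+1) s') := by
      intro s'; rw [VarG, hm2]
    rw [VarG, hm1]
    simp only [Var, hE, hE2]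
    simp only [hu, hVG1, hVG2]
    rw [show (∑ a, π t s a * (nuf T p π r t s a + ∑ s', p s a s' *
          Var p (mustar T p π r (bstar T p π r)) m (t + 1) s'
            (Gest π (mustar T p π r (bstar T p π r)) r (bstar T p π r) m (t + 1) s'))) +
        ((∑ a, π t s a * qf T p π r t s a ^ 2) - (∑ a, π t s a * qf T p π r t s a) ^ 2) +
        (∑ a, π t s a * ∑ s', p s a s' *
          (Var p π m (t + 1) s' (Gest π π r zerob m (t + 1) s') -
            Var p (mustar T p π r (bstar T p π r)) m (t + 1) s'
              (Gest π (mustar T p π r (bstar T p π r)) r (bstar T p π r) m (t + 1) s'))) =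
        ((∑ a, π t s a * (nuf T p π r t s a + ∑ s', p s a s' *
            Var p (mustar T p π r (bstar T p π r)) m (t + 1) s'
              (Gest π (mustar T p π r (bstar T p π r)) r (bstar T p π r) m (t + 1) s'))) +
         (∑ a, π t s a * qf T p π r t s a ^ 2) +
         (∑ a, π t s a * ∑ s', p s a s' *
            (Var p π m (t + 1) s' (Gest π π r zerob m (t + 1) s') -
              Var p (mustar T p π r (bstar T p π r)) m (t + 1) s'
                (Gest π (mustar T p π r (bstar T p π r)) r (bstar T p π r) m (t + 1) s')))) -
        (∑ a, π t s a * qf T p π r t s a) ^ 2 from by ring]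
    congr 1
    rw [← Finset.sum_add_distrib, ← Finset.sum_add_distrib]
    refine Finset.sum_congr rfl fun a _ => ?_
    have hsub : (∑ s', p s a s' *
          (Var p π m (t + 1) s' (Gest π π r zerob m (t + 1) s') -
            Var p (mustar T p π r (bstar T p π r)) m (t + 1) s'
              (Gest π (mustar T p π r (bstar T p π r)) r (bstar T p π r) m (t + 1) s'))) =
        (∑ s', p s a s' * Var p π m (t + 1) s' (Gest π π r zerob m (t + 1) s')) -
        (∑ s', p s a s' * Var p (mustar T p π r (bstar T p π r)) m (t + 1) s'
            (Gest π (mustar T p π r (bstar T p π r)) r (bstar T p π r) m (t + 1) s')) := by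
      rw [← Finset.sum_sub_distrib]
      exact Finset.sum_congr rfl fun s' _ => by ring
    rw [hsub]
    simp only [Var, mul_sub]
    ring

end DOpt
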